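/- Let α be irrational and let T : S¹ → S¹, Tx = x + α mod 1, be the corresponding ergodic circle rotation on S¹ = ℝ/ℤ with Lebesgue (Haar) probability measure, with Koopman operator 𝒰 f = f∘T on L²(S¹; ℂ). Then the set of cyclic vectors of 𝒰 contains a dense Gδ subset of L²(S¹; ℂ). -/

import Mathlib

open MeasureTheory Filter

/-- The Koopman operator `𝒰_T : g ↦ g ∘ T` on `L²_μ`. -/
noncomputable def koopman {X : Type*} [MeasurableSpace X] {μ : Measure X}
    (T : X → X) (hT : MeasurePreserving T μ μ) : Lp ℂ 2 μ →L[ℂ] Lp ℂ 2 μ :=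
  (Lp.compMeasurePreservingₗᵢ ℂ T hT).toContinuousLinearMap

/-- `g` is a cyclic vector of a bounded operator `U` on `L²_μ`. -/
def IsCyclicVector {X : Type*} [MeasurableSpace X] {μ : Measure X}
    (U : Lp ℂ 2 μ →L[ℂ] Lp ℂ 2 μ) (g : Lp ℂ 2 μ) : Prop :=
  (Submodule.span ℂ (Set.range fun n : ℕ => (U ^ n) g)).topologicalClosure = ⊤

/-- The ergodic circle rotation `x ↦ x + α (mod 1)` on `S¹ = ℝ/ℤ`. -/
noncomputable def circleRotation (a : ℝ) : UnitAddCircle → UnitAddCircle :=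
  fun x => x + (a : UnitAddCircle)

lemma circleRotation_measurePreserving (a : ℝ) :
    MeasurePreserving (circleRotation a) volume volume :=
  measurePreserving_add_right volume _

/-!
A vector with no vanishing Fourier coefficient is cyclic for the Koopman operator `𝒰` of an
irrational rotation. Indeed `𝒰` has the Fourier basis `eₙ` as eigenbasis with pairwise distinct
eigenvalues `λₙ = e^{2πinα}`, so by von Neumann's mean ergodic theorem the averages
`N⁻¹ ∑_{k<N} λₘ⁻ᵏ 𝒰ᵏ g`, which lie in the span of the orbit of `g`, converge to the orthogonal
projection of `g` onto the `λₘ`-eigenspace. Eigenvectors of an isometry for distinct eigenvalues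
are orthogonal, so this projection is `⟨eₘ, g⟩ eₘ`, and every `eₘ` lies in the closed span of the
orbit. The vectors with all Fourier coefficients nonzero form a countable intersection of open
dense sets, hence a dense `Gδ` by Baire.
-/

open Set Submodule Function AddCircle
open scoped InnerProductSpace

section NonvanishingFunctionals

variable {𝕜 E F ι : Type*} [NontriviallyNormedField 𝕜] [AddCommGroup E] [TopologicalSpace E]
  [Module 𝕜 E] [AddCommGroup F] [TopologicalSpace F] [Module 𝕜 F]

theorem ContinuousLinearMap.isOpen_setOf_ne_zero [T1Space F] (φ : E →L[𝕜] F) :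
    IsOpen {x | φ x ≠ 0} :=
  isOpen_compl_singleton.preimage φ.continuous

theorem ContinuousLinearMap.dense_setOf_ne_zero [IsTopologicalAddGroup E] [ContinuousSMul 𝕜 E]
    {φ : E →L[𝕜] F} (hφ : φ ≠ 0) : Dense {x | φ x ≠ 0} := by
  change Dense (LinearMap.ker (φ : E →ₗ[𝕜] F) : Set E)ᶜ
  rw [← interior_eq_empty_iff_dense_compl, ← not_nonempty_iff_eq_empty]
  exact fun h => hφ <| ContinuousLinearMap.coe_injective <| LinearMap.ker_eq_top.mp <|
    (LinearMap.ker _).eq_top_of_nonempty_interior' h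

theorem ContinuousLinearMap.isGδ_setOf_forall_ne_zero [T1Space F] [Countable ι]
    (φ : ι → E →L[𝕜] F) : IsGδ {x | ∀ i, φ i x ≠ 0} := by
  rw [ofPred_forall]
  exact .iInter_of_isOpen fun i => (φ i).isOpen_setOf_ne_zero

theorem ContinuousLinearMap.dense_setOf_forall_ne_zero [IsTopologicalAddGroup E]
    [ContinuousSMul 𝕜 E] [T1Space F] [BaireSpace E] [Countable ι] {φ : ι → E →L[𝕜] F}
    (hφ : ∀ i, φ i ≠ 0) : Dense {x | ∀ i, φ i x ≠ 0} := by
  rw [ofPred_forall]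
  exact dense_iInter_of_isOpen (fun i => (φ i).isOpen_setOf_ne_zero)
    fun i => ContinuousLinearMap.dense_setOf_ne_zero (hφ i)

end NonvanishingFunctionals

section IsometryEigenbasis

variable {𝕜 E ι : Type*} [RCLike 𝕜] [NormedAddCommGroup E] [InnerProductSpace 𝕜 E]

theorem HilbertBasis.eq_inner_smul_of_inner_eq_zero (b : HilbertBasis ι 𝕜 E) {x : E} {m : ι}
    (hx : ∀ i ≠ m, ⟪b i, x⟫_𝕜 = 0) : x = ⟪b m, x⟫_𝕜 • b m := by
  rw [← b.repr_apply_apply]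
  exact (b.hasSum_repr x).unique <| hasSum_single m fun i hi => by
    rw [b.repr_apply_apply, hx i hi, zero_smul]

theorem norm_eq_one_of_norm_map_of_eigenvector {U : E →L[𝕜] E} (hU : ∀ x, ‖U x‖ = ‖x‖)
    {x : E} (hx0 : x ≠ 0) {μ : 𝕜} (hx : U x = μ • x) : ‖μ‖ = 1 := by
  have := hU x
  rw [hx, norm_smul] at this
  exact (mul_eq_right₀ (norm_ne_zero_iff.mpr hx0)).mp this

theorem inner_eq_zero_of_norm_map_of_eigenvalue_ne {U : E →L[𝕜] E} (hU : ∀ x, ‖U x‖ = ‖x‖)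
    {x y : E} {μ ν : 𝕜} (hx : U x = μ • x) (hy : U y = ν • y) (hμν : μ ≠ ν) : ⟪x, y⟫_𝕜 = 0 := by
  rcases eq_or_ne x 0 with rfl | hx0
  · exact inner_zero_left _
  have hμ := norm_eq_one_of_norm_map_of_eigenvector hU hx0 hx
  have hinner := (LinearMap.norm_map_iff_inner_map_map U).mp hU x y
  rw [hx, hy, inner_smul_left, inner_smul_right, ← mul_assoc] at hinner
  have hμν' : (starRingEnd 𝕜) μ * ν ≠ 1 := fun h => hμν <|
    calc μ = μ * ((starRingEnd 𝕜) μ * ν) := by rw [h, mul_one]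
      _ = ν := by rw [← mul_assoc, RCLike.mul_conj, hμ, RCLike.ofReal_one, one_pow, one_mul]
  by_contra h
  exact hμν' ((mul_eq_right₀ h).mp hinner)

theorem birkhoffAverage_smul_mem_span_orbit (U : E →L[𝕜] E) (c : 𝕜) (g : E) (N : ℕ) :
    birkhoffAverage 𝕜 ⇑(c • U) id N g ∈ span 𝕜 (range fun n : ℕ => (U ^ n) g) := by
  refine smul_mem _ _ (sum_mem fun k _ => ?_)
  rw [id, ← FunLike.coe_pow_eq_iterate, smul_pow, smul_apply]
  exact smul_mem _ _ (subset_span ⟨k, rfl⟩)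

variable [CompleteSpace E] {U : E →L[𝕜] E} (b : HilbertBasis ι 𝕜 E) {μ : ι → 𝕜}

theorem HilbertBasis.mem_topologicalClosure_span_orbit (hU : ∀ x, ‖U x‖ = ‖x‖) (hμ : Injective μ)
    (hb : ∀ i, U (b i) = μ i • b i) {g : E} {m : ι} (hg : ⟪b m, g⟫_𝕜 ≠ 0) :
    b m ∈ (span 𝕜 (range fun n : ℕ => (U ^ n) g)).topologicalClosure := by
  have hμm : ‖μ m‖ = 1 :=
    norm_eq_one_of_norm_map_of_eigenvector hU (b.orthonormal.ne_zero m) (hb m)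
  have hμm0 : μ m ≠ 0 := norm_ne_zero_iff.mp (hμm.trans_ne one_ne_zero)
  set V := (μ m)⁻¹ • U
  have hV : ‖V‖ ≤ 1 := V.opNorm_le_bound zero_le_one fun x => by
    rw [smul_apply, norm_smul, norm_inv, hμm, hU, inv_one, one_mul]
  set K := (V : E →ₗ[𝕜] E).eqLocus (1 : E →L[𝕜] E)
  have mem_K : ∀ {x}, x ∈ K ↔ U x = μ m • x := inv_smul_eq_iff₀ hμm0
  set p : K := K.orthogonalProjectionOnto g
  have hp : (p : E) ∈ (span 𝕜 (range fun n : ℕ => (U ^ n) g)).topologicalClosure :=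
    (isClosed_topologicalClosure _).mem_of_tendsto
      (V.tendsto_birkhoffAverage_orthogonalProjection hV g)
      (Eventually.of_forall fun N => le_topologicalClosure _
        (birkhoffAverage_smul_mem_span_orbit U _ g N))
  have hpm : ⟪b m, (p : E)⟫_𝕜 = ⟪b m, g⟫_𝕜 := (K.coe_inner _ _).symm.trans
    (inner_orthogonalProjectionOnto_eq_of_mem_left ⟨b m, mem_K.mpr (hb m)⟩ g)
  have hpi : ∀ i ≠ m, ⟪b i, (p : E)⟫_𝕜 = 0 := fun i hi =>
    inner_eq_zero_of_norm_map_of_eigenvalue_ne hU (hb i) (mem_K.mp p.2) (hμ.ne hi)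
  rw [← inv_smul_smul₀ hg (b m), ← hpm, ← b.eq_inner_smul_of_inner_eq_zero hpi]
  exact smul_mem _ _ hp

theorem HilbertBasis.topologicalClosure_span_orbit_eq_top (hU : ∀ x, ‖U x‖ = ‖x‖) (hμ : Injective μ)
    (hb : ∀ i, U (b i) = μ i • b i) {g : E} (hg : ∀ i, ⟪b i, g⟫_𝕜 ≠ 0) :
    (span 𝕜 (range fun n : ℕ => (U ^ n) g)).topologicalClosure = ⊤ := by
  rw [eq_top_iff, ← b.dense_span]
  refine topologicalClosure_minimal _ ?_ (isClosed_topologicalClosure _)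
  exact span_le.mpr <| range_subset_iff.mpr fun m =>
    b.mem_topologicalClosure_span_orbit hU hμ hb (hg m)

theorem HilbertBasis.exists_isGδ_dense_forall_topologicalClosure_span_orbit_eq_top
    [Countable ι] (hU : ∀ x, ‖U x‖ = ‖x‖) (hμ : Injective μ)
    (hb : ∀ i, U (b i) = μ i • b i) : ∃ G : Set E, IsGδ G ∧ Dense G ∧
      ∀ g ∈ G, (span 𝕜 (range fun n : ℕ => (U ^ n) g)).topologicalClosure = ⊤ := by
  have hb0 : ∀ i, innerSL 𝕜 (b i) ≠ 0 := fun i => by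
    rw [← norm_ne_zero_iff, innerSL_apply_norm, b.orthonormal.1 i]
    exact one_ne_zero
  refine ⟨{g | ∀ i, innerSL 𝕜 (b i) g ≠ 0}, ContinuousLinearMap.isGδ_setOf_forall_ne_zero _,
    ContinuousLinearMap.dense_setOf_forall_ne_zero hb0, fun g hg => ?_⟩
  exact b.topologicalClosure_span_orbit_eq_top hU hμ hb hg

end IsometryEigenbasis

theorem norm_koopman_apply {X : Type*} [MeasurableSpace X] {μ : Measure X} {T : X → X}
    (hT : MeasurePreserving T μ μ) (f : Lp ℂ 2 μ) : ‖koopman T hT f‖ = ‖f‖ :=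
  (Lp.compMeasurePreservingₗᵢ ℂ T hT).norm_map f

theorem fourier_add_right {T : ℝ} (n : ℤ) (x y : AddCircle T) :
    fourier n (x + y) = fourier n y * fourier n x := by
  rw [fourier_apply, fourier_apply, fourier_apply, smul_add, toCircle_add, Circle.coe_mul,
    mul_comm]

theorem injective_fourier_apply_of_irrational {a : ℝ} (ha : Irrational a) :
    Injective fun n : ℤ => fourier n (a : UnitAddCircle) :=
  Circle.coe_injective.comp <| (injective_toCircle one_ne_zero).comp <|
    injective_zsmul_iff_not_isOfFinAddOrder.mpr <|
      not_isOfFinAddOrder_iff_forall_rat_ne_div.mpr fun q hq => ha ⟨q, by simpa using hq⟩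

theorem koopman_circleRotation_fourierLp (a : ℝ)
    (hT : MeasurePreserving (circleRotation a) haarAddCircle haarAddCircle) (n : ℤ) :
    koopman (circleRotation a) hT (fourierLp 2 n) =
      fourier n (a : UnitAddCircle) • fourierLp 2 n := by
  apply Lp.ext
  filter_upwards [Lp.coeFn_compMeasurePreserving (fourierLp 2 n) hT,
    hT.quasiMeasurePreserving.ae_eq_comp (coeFn_fourierLp 2 n),
    Lp.coeFn_smul (fourier n (a : UnitAddCircle)) (fourierLp (T := 1) 2 n), coeFn_fourierLp 2 n]
    with x hx hcomp hsmul hx'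
  rw [hsmul, Pi.smul_apply, hx', smul_eq_mul, ← fourier_add_right]
  exact hx.trans hcomp

/-- for an irrational rotation of the circle `S¹ = ℝ/ℤ` (with Lebesgue
measure), the set of cyclic vectors of the associated Koopman operator contains a dense
`Gδ` subset of `L²(S¹; ℂ)`. -/
theorem circleRotation_cyclic_vectors_dense_Gdelta (a : ℝ) (ha : Irrational a) :
    ∃ G : Set (Lp ℂ 2 (volume : Measure UnitAddCircle)),
      IsGδ G ∧ Dense G ∧
      ∀ g ∈ G, IsCyclicVector
        (koopman (circleRotation a) (circleRotation_measurePreserving a)) g := by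
  have hvol : (volume : Measure UnitAddCircle) = haarAddCircle := by
    rw [volume_eq_smul_haarAddCircle, ENNReal.ofReal_one, one_smul]
  -- `volume` is only propositionally equal to `haarAddCircle`, and `koopman` depends on the proof
  -- of measure preservation, so the rewrite has to happen under a binder for that proof.
  generalize circleRotation_measurePreserving a = hT
  revert hT
  rw [hvol]
  intro hT
  exact fourierBasis.exists_isGδ_dense_forall_topologicalClosure_span_orbit_eq_top
    (norm_koopman_apply hT) (injective_fourier_apply_of_irrational ha)
    fun n => by rw [coe_fourierBasis]; exact koopman_circleRotation_fourierLp a hT n
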